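/- arXiv:q-bio/0507038 — 3 statements merged into one kernel-verified Lean document; each statement's English description precedes it below -/
import Mathlib

section
/- Let φ₀ : ℝ → ℝ and l_A, l_B : ℝ → ℝ be nonnegative differentiable functions on [0,∞) satisfying dφ₀/dσ = χ(l_A + l_B) − Σ_j ξ_j φ₀ s_j(0) F_j(σ) and d l_j/dσ = P_j s_j(0) F_j(σ) − l_j, where F_j(σ) = ξ_j φ₀(σ) exp(−∫₀^σ ξ_j φ₀(x) dx), s_j(0) ≥ 0, ξ_j > 0, P_j ∈ (0,1], and χ P_j > 1 for j = A, B. If φ₀(0) > 0, then φ₀(σ) > 0 for all σ ≥ 0. -/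
theorem stmt_1 (φ₀ lA lB : ℝ → ℝ) (χ ξA ξB PA PB sA0 sB0 : ℝ)
    (hsA0 : 0 ≤ sA0) (hsB0 : 0 ≤ sB0)
    (hξA : 0 < ξA) (hξB : 0 < ξB)
    (hPA : PA ∈ Set.Ioc (0:ℝ) 1) (hPB : PB ∈ Set.Ioc (0:ℝ) 1)
    (hχA : 1 < χ * PA) (hχB : 1 < χ * PB)
    (FA : ℝ → ℝ) (FB : ℝ → ℝ)
    (hFA : ∀ σ : ℝ, FA σ = ξA * φ₀ σ * Real.exp (-(∫ x in (0:ℝ)..σ, ξA * φ₀ x)))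
    (hFB : ∀ σ : ℝ, FB σ = ξB * φ₀ σ * Real.exp (-(∫ x in (0:ℝ)..σ, ξB * φ₀ x)))
    (hφnonneg : ∀ σ : ℝ, 0 ≤ σ → 0 ≤ φ₀ σ)
    (hlAnonneg : ∀ σ : ℝ, 0 ≤ σ → 0 ≤ lA σ)
    (hlBnonneg : ∀ σ : ℝ, 0 ≤ σ → 0 ≤ lB σ)
    (hφODE : ∀ σ : ℝ, 0 ≤ σ →
      HasDerivAt φ₀ (χ * (lA σ + lB σ) - (sA0 * FA σ + sB0 * FB σ)) σ)
    (hlAODE : ∀ σ : ℝ, 0 ≤ σ → HasDerivAt lA (PA * sA0 * FA σ - lA σ) σ)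
    (hlBODE : ∀ σ : ℝ, 0 ≤ σ → HasDerivAt lB (PB * sB0 * FB σ - lB σ) σ)
    (hφ0 : 0 < φ₀ 0) :
    ∀ σ : ℝ, 0 ≤ σ → 0 < φ₀ σ := by
  have hχ : 0 < χ := by nlinarith [hPA.1, hPA.2]
  set C : ℝ := sA0 * ξA + sB0 * ξB with hC
  have hCnn : 0 ≤ C := by positivity
  set g : ℝ → ℝ := fun σ => φ₀ σ * Real.exp (C * σ) with hg
  -- derivative of g
  have hgderiv : ∀ σ : ℝ, 0 ≤ σ → HasDerivAt g
      ((χ * (lA σ + lB σ) - (sA0 * FA σ + sB0 * FB σ)) * Real.exp (C * σ)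
        + φ₀ σ * (C * Real.exp (C * σ))) σ := by
    intro σ hσ
    have he : HasDerivAt (fun x : ℝ => Real.exp (C * x)) (C * Real.exp (C * σ)) σ := by
      have := ((hasDerivAt_id σ).const_mul C).exp
      simpa [mul_comm] using this
    exact (hφODE σ hσ).mul he
  -- the derivative is nonnegative on [0, ∞)
  have hderiv_nonneg : ∀ σ : ℝ, 0 ≤ σ →
      0 ≤ (χ * (lA σ + lB σ) - (sA0 * FA σ + sB0 * FB σ)) * Real.exp (C * σ)
        + φ₀ σ * (C * Real.exp (C * σ)) := by
    intro σ hσ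
    have he : (0:ℝ) < Real.exp (C * σ) := Real.exp_pos _
    have hφσ : 0 ≤ φ₀ σ := hφnonneg σ hσ
    have hIA : 0 ≤ ∫ x in (0:ℝ)..σ, ξA * φ₀ x := by
      apply intervalIntegral.integral_nonneg hσ
      intro u hu
      exact mul_nonneg hξA.le (hφnonneg u hu.1)
    have hIB : 0 ≤ ∫ x in (0:ℝ)..σ, ξB * φ₀ x := by
      apply intervalIntegral.integral_nonneg hσ
      intro u hu
      exact mul_nonneg hξB.le (hφnonneg u hu.1)
    have hFAle : FA σ ≤ ξA * φ₀ σ := by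
      rw [hFA σ]
      have : Real.exp (-(∫ x in (0:ℝ)..σ, ξA * φ₀ x)) ≤ 1 :=
        Real.exp_le_one_iff.mpr (neg_nonpos.mpr hIA)
      nlinarith [mul_nonneg hξA.le hφσ]
    have hFBle : FB σ ≤ ξB * φ₀ σ := by
      rw [hFB σ]
      have : Real.exp (-(∫ x in (0:ℝ)..σ, ξB * φ₀ x)) ≤ 1 :=
        Real.exp_le_one_iff.mpr (neg_nonpos.mpr hIB)
      nlinarith [mul_nonneg hξB.le hφσ]
    have hl : 0 ≤ χ * (lA σ + lB σ) :=
      mul_nonneg hχ.le (add_nonneg (hlAnonneg σ hσ) (hlBnonneg σ hσ))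
    have key : 0 ≤ χ * (lA σ + lB σ) - (sA0 * FA σ + sB0 * FB σ) + φ₀ σ * C := by
      have h1 : sA0 * FA σ ≤ sA0 * (ξA * φ₀ σ) := mul_le_mul_of_nonneg_left hFAle hsA0
      have h2 : sB0 * FB σ ≤ sB0 * (ξB * φ₀ σ) := mul_le_mul_of_nonneg_left hFBle hsB0
      simp only [hC]
      nlinarith
    nlinarith
  -- g is monotone on [0, ∞)
  have hmono : MonotoneOn g (Set.Ici (0:ℝ)) := by
    apply monotoneOn_of_deriv_nonneg (convex_Ici 0)
    · intro x hx
      exact ((hgderiv x hx).continuousAt).continuousWithinAt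
    · intro x hx
      rw [interior_Ici] at hx
      exact ((hgderiv x (le_of_lt hx)).differentiableAt).differentiableWithinAt
    · intro x hx
      rw [interior_Ici] at hx
      rw [(hgderiv x (le_of_lt hx)).deriv]
      exact hderiv_nonneg x (le_of_lt hx)
  intro σ hσ
  have h0 : g 0 ≤ g σ := hmono (Set.self_mem_Ici) hσ hσ
  have hg0 : g 0 = φ₀ 0 := by simp [hg]
  have he : (0:ℝ) < Real.exp (C * σ) := Real.exp_pos _
  have : 0 < φ₀ σ * Real.exp (C * σ) := by
    have : 0 < g σ := lt_of_lt_of_le (hg0 ▸ hφ0) h0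
    simpa [hg] using this
  nlinarith
end

section
/- Consider the reduced system di_A/dτ = (1 − (i_A + i_B)/n_max − α) i_A, di_B/dτ = (1 − (i_A + i_B)/n_max − α) i_B, with n_max > 0, α ≥ 1, and positive initial conditions. Then i_A(τ) and i_B(τ) are strictly decreasing and tend to 0 as τ → ∞. -/
open Filter

private lemma aux_decay (iA iB : ℝ → ℝ) (nmax α : ℝ)
    (hnmax : 0 < nmax) (hα : 1 ≤ α)
    (hposA : ∀ τ : ℝ, 0 ≤ τ → 0 < iA τ)
    (hposB : ∀ τ : ℝ, 0 ≤ τ → 0 < iB τ)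
    (hA : ∀ τ : ℝ, 0 ≤ τ →
      HasDerivAt iA ((1 - (iA τ + iB τ) / nmax - α) * iA τ) τ) :
    StrictAntiOn iA (Set.Ici 0) ∧ Filter.Tendsto iA Filter.atTop (nhds 0) := by
  have hneg : ∀ τ : ℝ, 0 ≤ τ → (1 - (iA τ + iB τ) / nmax - α) < 0 := by
    intro τ hτ
    have h1 := hposA τ hτ
    have h2 := hposB τ hτ
    have : 0 < (iA τ + iB τ) / nmax := by positivity
    linarith
  have hanti : StrictAntiOn iA (Set.Ici 0) := by
    apply strictAntiOn_of_deriv_neg (convex_Ici 0)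
    · exact fun τ hτ => (hA τ hτ).continuousAt.continuousWithinAt
    · intro τ hτ
      rw [interior_Ici] at hτ
      have hτ' : (0:ℝ) ≤ τ := le_of_lt hτ
      rw [(hA τ hτ').deriv]
      exact mul_neg_of_neg_of_pos (hneg τ hτ') (hposA τ hτ')
  refine ⟨hanti, ?_⟩
  set g : ℝ → ℝ := fun τ => (iA τ)⁻¹ with hg
  set h : ℝ → ℝ := fun τ => g τ - τ / nmax with hhdef
  have hgd : ∀ τ : ℝ, 0 ≤ τ → HasDerivAt g
      (-((1 - (iA τ + iB τ) / nmax - α) * iA τ) / (iA τ)^2) τ :=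
    fun τ hτ => (hA τ hτ).inv (ne_of_gt (hposA τ hτ))
  have hhd : ∀ τ : ℝ, 0 ≤ τ → HasDerivAt h
      (-((1 - (iA τ + iB τ) / nmax - α) * iA τ) / (iA τ)^2 - 1 / nmax) τ := by
    intro τ hτ
    have h2 : HasDerivAt (fun τ : ℝ => τ / nmax) (1 / nmax) τ := by
      simpa using (hasDerivAt_id τ).div_const nmax
    exact (hgd τ hτ).sub h2
  have hdnn : ∀ τ : ℝ, 0 ≤ τ →
      0 ≤ -((1 - (iA τ + iB τ) / nmax - α) * iA τ) / (iA τ)^2 - 1 / nmax := by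
    intro τ hτ
    have ha := hposA τ hτ
    have hb := hposB τ hτ
    rw [sub_nonneg, div_le_div_iff₀ hnmax (by positivity)]
    have : (1 - (iA τ + iB τ) / nmax - α) * nmax = nmax - (iA τ + iB τ) - α * nmax := by
      field_simp
    nlinarith [mul_pos ha hb, sq_nonneg (iA τ), mul_pos ha (mul_pos hb hnmax),
      mul_nonneg (mul_nonneg (sub_nonneg.2 hα) hnmax.le) (sq_nonneg (iA τ))]
  have hmono : MonotoneOn h (Set.Ici 0) := by
    refine monotoneOn_of_deriv_nonneg (convex_Ici 0) ?_ ?_ ?_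
    · exact fun τ hτ => ((hhd τ hτ).continuousAt).continuousWithinAt
    · intro τ hτ
      rw [interior_Ici] at hτ
      exact ((hhd τ hτ.le).differentiableAt).differentiableWithinAt
    · intro τ hτ
      rw [interior_Ici] at hτ
      have hτ' : (0:ℝ) ≤ τ := le_of_lt hτ
      rw [(hhd τ hτ').deriv]
      exact hdnn τ hτ'
  have hbound : ∀ τ : ℝ, 0 ≤ τ → iA τ ≤ (g 0 + τ / nmax)⁻¹ := by
    intro τ hτ
    have h0 : h 0 ≤ h τ := hmono (Set.self_mem_Ici) hτ hτ  -- h 0 ≤ h τ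
    simp only [hhdef, zero_div, sub_zero] at h0
    have hgτ : g 0 + τ / nmax ≤ g τ := by linarith
    have hpos0 : 0 < g 0 + τ / nmax := by
      have : 0 < g 0 := inv_pos.2 (hposA 0 le_rfl); positivity
    have : (g τ)⁻¹ ≤ (g 0 + τ / nmax)⁻¹ := by
      apply inv_anti₀ hpos0 hgτ
    simpa [hg, inv_inv] using this
  have hupper : Tendsto (fun τ : ℝ => (g 0 + τ / nmax)⁻¹) atTop (nhds 0) := by
    apply Tendsto.inv_tendsto_atTop
    apply tendsto_atTop_add_const_left
    exact Tendsto.atTop_div_const hnmax tendsto_id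
  apply tendsto_of_tendsto_of_tendsto_of_le_of_le' tendsto_const_nhds hupper
  · filter_upwards [eventually_ge_atTop (0:ℝ)] with τ hτ using (hposA τ hτ).le
  · filter_upwards [eventually_ge_atTop (0:ℝ)] with τ hτ using hbound τ hτ

theorem stmt_12 (iA iB : ℝ → ℝ) (nmax α : ℝ)
    (hnmax : 0 < nmax) (hα : 1 ≤ α)
    (hposA : ∀ τ : ℝ, 0 ≤ τ → 0 < iA τ)
    (hposB : ∀ τ : ℝ, 0 ≤ τ → 0 < iB τ)
    (hA : ∀ τ : ℝ, 0 ≤ τ →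
      HasDerivAt iA ((1 - (iA τ + iB τ) / nmax - α) * iA τ) τ)
    (hB : ∀ τ : ℝ, 0 ≤ τ →
      HasDerivAt iB ((1 - (iA τ + iB τ) / nmax - α) * iB τ) τ) :
    StrictAntiOn iA (Set.Ici 0) ∧ StrictAntiOn iB (Set.Ici 0) ∧
      Filter.Tendsto iA Filter.atTop (nhds 0) ∧
      Filter.Tendsto iB Filter.atTop (nhds 0) := by
  have hB' : ∀ τ : ℝ, 0 ≤ τ →
      HasDerivAt iB ((1 - (iB τ + iA τ) / nmax - α) * iB τ) τ := by
    intro τ hτ; have := hB τ hτ; rwa [add_comm (iB τ)]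
  obtain ⟨h1, h2⟩ := aux_decay iA iB nmax α hnmax hα hposA hposB hA
  obtain ⟨h3, h4⟩ := aux_decay iB iA nmax α hnmax hα hposB hposA hB'
  exact ⟨h1, h3, h2, h4⟩
end

section
/- Consider the reduced system di_A/dτ = (1 − (i_A + i_B)/n_max − α) i_A, di_B/dτ = (1 − (i_A + i_B)/n_max − α) i_B, with n_max > 0, 0 ≤ α < 1, and positive initial conditions. Then the ratio i_A(τ)/i_B(τ) is constant in τ, and i_A(τ) + i_B(τ) → (1−α) n_max as τ → ∞. -/
/-!
Both populations have the same per-capita growth rate, so the derivative of `i_A / i_B`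
vanishes. The total `s = i_A + i_B` solves the logistic equation `s' = (r - s / n_max) s`
with `r = 1 - α > 0`, and its reciprocal `u = 1 / s` solves the linear equation
`u' = -r (u - 1 / (r n_max))`; hence `e^{r τ} (u - 1 / (r n_max))` is constant,
`u → 1 / (r n_max)` and `s → r n_max`.
-/

open Set Filter Topology

theorem eq_of_hasDerivAt_zero_Ici {E : Type*} [NormedAddCommGroup E] [NormedSpace ℝ E]
    {f : ℝ → E} {a : ℝ} (hf : ∀ t ∈ Ici a, HasDerivAt f 0 t) :
    ∀ t ∈ Ici a, f t = f a := fun t ht =>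
  constant_of_has_deriv_right_zero (b := t)
    (fun x hx => (hf x hx.1).continuousAt.continuousWithinAt)
    (fun x hx => (hf x hx.1).hasDerivWithinAt) t ⟨ht, le_rfl⟩

theorem div_eq_of_hasDerivAt_mul_self {f g c : ℝ → ℝ} {a : ℝ}
    (hg₀ : ∀ t ∈ Ici a, g t ≠ 0)
    (hf : ∀ t ∈ Ici a, HasDerivAt f (c t * f t) t)
    (hg : ∀ t ∈ Ici a, HasDerivAt g (c t * g t) t) :
    ∀ t ∈ Ici a, f t / g t = f a / g a :=
  eq_of_hasDerivAt_zero_Ici fun t ht =>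
    ((hf t ht).div (hg t ht) (hg₀ t ht)).congr_deriv (by ring)

theorem tendsto_of_hasDerivAt_neg_mul_sub {u : ℝ → ℝ} {r c a : ℝ} (hr : 0 < r)
    (hu : ∀ t ∈ Ici a, HasDerivAt u (-r * (u t - c)) t) :
    Tendsto u atTop (𝓝 c) := by
  set w : ℝ → ℝ := fun t => Real.exp (r * t) * (u t - c)
  have hw : ∀ t ∈ Ici a, w t = w a := eq_of_hasDerivAt_zero_Ici fun t ht => by
    have hexp : HasDerivAt (fun t => Real.exp (r * t)) (Real.exp (r * t) * r) t := by
      simpa [mul_comm] using ((hasDerivAt_id t).const_mul r).exp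
    exact (hexp.mul ((hu t ht).sub_const c)).congr_deriv (by ring)
  have hu_eq : ∀ᶠ t in atTop, c + Real.exp (-(r * t)) * w a = u t := by
    filter_upwards [eventually_ge_atTop a] with t ht
    rw [← hw t ht, Real.exp_neg]
    field_simp
    ring
  have hdecay : Tendsto (fun t => Real.exp (-(r * t))) atTop (𝓝 0) :=
    Real.tendsto_exp_atBot.comp (tendsto_neg_atTop_atBot.comp (tendsto_id.const_mul_atTop hr))
  simpa using (tendsto_const_nhds.add (hdecay.mul_const (w a))).congr' hu_eq

theorem tendsto_of_hasDerivAt_logistic {s : ℝ → ℝ} {r K a : ℝ} (hr : 0 < r) (hK : K ≠ 0)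
    (hs₀ : ∀ t ∈ Ici a, s t ≠ 0)
    (hs : ∀ t ∈ Ici a, HasDerivAt s ((r - s t / K) * s t) t) :
    Tendsto s atTop (𝓝 (r * K)) := by
  have hrK : r * K ≠ 0 := mul_ne_zero hr.ne' hK
  have hinv : Tendsto (fun t => (s t)⁻¹) atTop (𝓝 (r * K)⁻¹) :=
    tendsto_of_hasDerivAt_neg_mul_sub hr fun t ht => by
      have := hs₀ t ht
      refine ((hs t ht).inv this).congr_deriv ?_
      field_simp
  simpa using hinv.inv₀ (inv_ne_zero hrK)

theorem stmt_13_general (iA iB : ℝ → ℝ) (nmax α : ℝ)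
    (hnmax : 0 < nmax) (hα1 : α < 1)
    (hposA : ∀ τ : ℝ, 0 ≤ τ → 0 < iA τ)
    (hposB : ∀ τ : ℝ, 0 ≤ τ → 0 < iB τ)
    (hA : ∀ τ : ℝ, 0 ≤ τ →
      HasDerivAt iA ((1 - (iA τ + iB τ) / nmax - α) * iA τ) τ)
    (hB : ∀ τ : ℝ, 0 ≤ τ →
      HasDerivAt iB ((1 - (iA τ + iB τ) / nmax - α) * iB τ) τ) :
    (∀ τ : ℝ, 0 ≤ τ → iA τ / iB τ = iA 0 / iB 0) ∧
      Filter.Tendsto (fun τ => iA τ + iB τ) Filter.atTop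
        (nhds ((1 - α) * nmax)) := by
  refine ⟨div_eq_of_hasDerivAt_mul_self (fun τ hτ => (hposB τ hτ).ne') hA hB, ?_⟩
  refine tendsto_of_hasDerivAt_logistic (a := 0) (sub_pos.2 hα1) hnmax.ne'
    (fun τ hτ => (add_pos (hposA τ hτ) (hposB τ hτ)).ne') fun τ hτ => ?_
  exact ((hA τ hτ).add (hB τ hτ)).congr_deriv (by ring)

theorem stmt_13 (iA iB : ℝ → ℝ) (nmax α : ℝ)
    (hnmax : 0 < nmax) (hα : 0 ≤ α) (hα1 : α < 1)
    (hposA : ∀ τ : ℝ, 0 ≤ τ → 0 < iA τ)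
    (hposB : ∀ τ : ℝ, 0 ≤ τ → 0 < iB τ)
    (hA : ∀ τ : ℝ, 0 ≤ τ →
      HasDerivAt iA ((1 - (iA τ + iB τ) / nmax - α) * iA τ) τ)
    (hB : ∀ τ : ℝ, 0 ≤ τ →
      HasDerivAt iB ((1 - (iA τ + iB τ) / nmax - α) * iB τ) τ) :
    (∀ τ : ℝ, 0 ≤ τ → iA τ / iB τ = iA 0 / iB 0) ∧
      Filter.Tendsto (fun τ => iA τ + iB τ) Filter.atTop
        (nhds ((1 - α) * nmax)) :=
  stmt_13_general iA iB nmax α hnmax hα1 hposA hposB hA hB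
end
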